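/- arXiv:math/0111087 — 2 statements merged into one kernel-verified Lean document; each statement's English description precedes it below -/
import Mathlib

section
/- If a metric space X is a union A ∪ B of two subspaces, then asdim(A ∪ B) ≤ max{asdim A, asdim B}. -/
/-!
Take `d`-disjoint families `𝒱ᵢ` on `B`, all bounded by `R`, and `(3d + 2R)`-disjoint families `𝒰ᵢ`
on `A`, bounded by `D`. Enlarge each `U ∈ 𝒰ᵢ` by every `V ∈ 𝒱ᵢ` that comes within `d` of it, and keep
the `V ∈ 𝒱ᵢ` that stay farther than `d` from all of `𝒰ᵢ`. Every point of an enlarged set lies within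
`R + d` of `U`, so the new family is `(D + 2R + 2d)`-bounded, and the margin `3d + 2R` between
distinct members of `𝒰ᵢ` leaves the enlarged sets `d` apart; the sets of `𝒱ᵢ` that were kept are
`d` apart from the enlarged sets by construction.
-/

open Metric Set

/-- A family of subsets of a metric space is uniformly bounded. -/
def UnifBounded {X : Type*} [MetricSpace X] (𝔘 : Set (Set X)) : Prop :=
  ∃ R : ℝ, ∀ U ∈ 𝔘, ∀ x ∈ U, ∀ y ∈ U, dist x y ≤ R

/-- A family of subsets is `d`-disjoint. -/
def DDisjoint {X : Type*} [MetricSpace X] (d : ℝ) (𝔘 : Set (Set X)) : Prop :=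
  ∀ U ∈ 𝔘, ∀ V ∈ 𝔘, U ≠ V → ∀ x ∈ U, ∀ y ∈ V, d ≤ dist x y

/-- `asdim X ≤ n`: for every `d > 0` there exist `n+1` uniformly bounded `d`-disjoint
families of subsets of `X` whose union covers `X`. -/
def ASDimLE (X : Type*) [MetricSpace X] (n : ℕ) : Prop :=
  ∀ d : ℝ, 0 < d → ∃ 𝔘 : Fin (n + 1) → Set (Set X),
    (∀ i, UnifBounded (𝔘 i) ∧ DDisjoint d (𝔘 i)) ∧
    ∀ x : X, ∃ i, ∃ U ∈ 𝔘 i, x ∈ U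

section Families

variable {X Y : Type*} [MetricSpace X] [MetricSpace Y]

theorem unifBounded_empty : UnifBounded (∅ : Set (Set X)) :=
  ⟨0, fun _ hU => hU.elim⟩

theorem dDisjoint_empty (d : ℝ) : DDisjoint d (∅ : Set (Set X)) :=
  fun _ hU => hU.elim

theorem UnifBounded.exists_nonneg {𝔘 : Set (Set X)} (h : UnifBounded 𝔘) :
    ∃ R, 0 ≤ R ∧ ∀ U ∈ 𝔘, ∀ x ∈ U, ∀ y ∈ U, dist x y ≤ R := by
  obtain ⟨R, hR⟩ := h
  exact ⟨max R 0, le_max_right R 0,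
    fun U hU x hx y hy => (hR U hU x hx y hy).trans (le_max_left R 0)⟩

theorem unifBounded_iUnion {ι : Type*} [Finite ι] {𝔘 : ι → Set (Set X)}
    (h : ∀ i, UnifBounded (𝔘 i)) : UnifBounded (⋃ i, 𝔘 i) := by
  choose R hR using h
  obtain ⟨M, hM⟩ := (Set.finite_range R).bddAbove
  refine ⟨M, fun U hU x hx y hy => ?_⟩
  obtain ⟨i, hUi⟩ := mem_iUnion.1 hU
  exact (hR i U hUi x hx y hy).trans (hM (mem_range_self i))

theorem UnifBounded.image_isometry {f : X → Y} (hf : Isometry f) {𝔘 : Set (Set X)}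
    (h : UnifBounded 𝔘) : UnifBounded (image f '' 𝔘) := by
  obtain ⟨R, hR⟩ := h
  refine ⟨R, ?_⟩
  rintro _ ⟨U, hU, rfl⟩ _ ⟨x, hx, rfl⟩ _ ⟨y, hy, rfl⟩
  rw [hf.dist_eq]
  exact hR U hU x hx y hy

theorem DDisjoint.image_isometry {f : X → Y} (hf : Isometry f) {d : ℝ} {𝔘 : Set (Set X)}
    (h : DDisjoint d 𝔘) : DDisjoint d (image f '' 𝔘) := by
  rintro _ ⟨U, hU, rfl⟩ _ ⟨V, hV, rfl⟩ hUV _ ⟨x, hx, rfl⟩ _ ⟨y, hy, rfl⟩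
  rw [hf.dist_eq]
  exact h U hU V hV (fun hUV' => hUV (hUV' ▸ rfl)) x hx y hy

end Families

theorem exists_mem_sUnion_image_val {X ι : Type*} {A : Set X} {𝔘 : ι → Set (Set A)}
    (hcov : ∀ a : A, ∃ i, ∃ U ∈ 𝔘 i, a ∈ U) {x : X} (hx : x ∈ A) :
    ∃ i, x ∈ ⋃₀ (image (↑) '' 𝔘 i : Set (Set X)) := by
  obtain ⟨i, U, hU, hxU⟩ := hcov ⟨x, hx⟩
  exact ⟨i, _, mem_image_of_mem _ hU, _, hxU, rfl⟩

theorem ASDimLE.mono {X : Type*} [MetricSpace X] {m n : ℕ} (hmn : m ≤ n) (h : ASDimLE X m) :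
    ASDimLE X n := by
  intro d hd
  obtain ⟨𝔘, h𝔘, hcov⟩ := h d hd
  have hinj : Function.Injective (Fin.castLE (Nat.succ_le_succ hmn)) := Fin.castLE_injective _
  refine ⟨Function.extend (Fin.castLE (Nat.succ_le_succ hmn)) 𝔘 fun _ => ∅, fun i => ?_,
    fun x => ?_⟩
  · by_cases hi : ∃ j, Fin.castLE (Nat.succ_le_succ hmn) j = i
    · obtain ⟨j, rfl⟩ := hi
      rw [hinj.extend_apply]
      exact h𝔘 j
    · rw [Function.extend_apply' _ _ _ hi]
      exact ⟨unifBounded_empty, dDisjoint_empty d⟩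
  · obtain ⟨j, U, hU, hx⟩ := hcov x
    exact ⟨_, U, by rwa [hinj.extend_apply], hx⟩

section SaturatedUnion

variable {X : Type*} [MetricSpace X]

def NearSets (d : ℝ) (V U : Set X) : Prop :=
  ∃ v ∈ V, ∃ u ∈ U, dist v u ≤ d

def saturation (d : ℝ) (𝔙 : Set (Set X)) (U : Set X) : Set X :=
  U ∪ ⋃₀ {V ∈ 𝔙 | NearSets d V U}

/-- The `d`-saturated union `𝔘 ∪_d 𝔙` of Bell and Dranishnikov. -/
def saturatedUnion (d : ℝ) (𝔘 𝔙 : Set (Set X)) : Set (Set X) :=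
  saturation d 𝔙 '' 𝔘 ∪ {V ∈ 𝔙 | ∀ U ∈ 𝔘, ¬NearSets d V U}

variable {d R : ℝ} {𝔘 𝔙 : Set (Set X)}

theorem exists_dist_le_of_mem_saturation (hd : 0 ≤ d) (hR : 0 ≤ R)
    (hR𝔙 : ∀ V ∈ 𝔙, ∀ x ∈ V, ∀ y ∈ V, dist x y ≤ R) {U : Set X} {x : X}
    (hx : x ∈ saturation d 𝔙 U) : ∃ u ∈ U, dist x u ≤ R + d := by
  rcases hx with hxU | ⟨V, ⟨hV, v, hv, u, hu, hvu⟩, hxV⟩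
  · exact ⟨x, hxU, by rw [dist_self]; positivity⟩
  · refine ⟨u, hu, ?_⟩
    calc dist x u ≤ dist x v + dist v u := dist_triangle x v u
      _ ≤ R + d := add_le_add (hR𝔙 V hV x hxV v hv) hvu

theorem le_dist_of_mem_saturation (h𝔙 : DDisjoint d 𝔙) {U V : Set X} (hV : V ∈ 𝔙)
    (hfar : ¬NearSets d V U) {x y : X} (hx : x ∈ saturation d 𝔙 U) (hy : y ∈ V) :
    d ≤ dist x y := by
  rcases hx with hxU | ⟨W, ⟨hW, hWU⟩, hxW⟩
  · by_contra! hxy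
    exact hfar ⟨y, hy, x, hxU, (dist_comm y x).trans_le hxy.le⟩
  · have hWV : W ≠ V := by
      rintro rfl
      exact hfar hWU
    exact h𝔙 W hW V hV hWV x hxW y hy

theorem UnifBounded.saturatedUnion (hd : 0 ≤ d) (h𝔘 : UnifBounded 𝔘)
    (h𝔙 : UnifBounded 𝔙) : UnifBounded (saturatedUnion d 𝔘 𝔙) := by
  obtain ⟨D, hD, hD𝔘⟩ := h𝔘.exists_nonneg
  obtain ⟨R, hR, hR𝔙⟩ := h𝔙.exists_nonneg
  refine ⟨D + 2 * (R + d), ?_⟩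
  rintro _ (⟨U, hU, rfl⟩ | ⟨hV, -⟩) x hx y hy
  · obtain ⟨u, hu, hxu⟩ := exists_dist_le_of_mem_saturation hd hR hR𝔙 hx
    obtain ⟨u', hu', hyu'⟩ := exists_dist_le_of_mem_saturation hd hR hR𝔙 hy
    calc dist x y ≤ dist x u + dist u u' + dist y u' := by
          simpa only [dist_comm u' y] using dist_triangle4 x u u' y
      _ ≤ (R + d) + D + (R + d) := by gcongr; exact hD𝔘 U hU u hu u' hu'
      _ = D + 2 * (R + d) := by ring
  · linarith [hR𝔙 _ hV x hx y hy]

theorem DDisjoint.saturatedUnion (hd : 0 ≤ d) (hR : 0 ≤ R)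
    (hR𝔙 : ∀ V ∈ 𝔙, ∀ x ∈ V, ∀ y ∈ V, dist x y ≤ R)
    (h𝔘 : DDisjoint (3 * d + 2 * R) 𝔘) (h𝔙 : DDisjoint d 𝔙) :
    DDisjoint d (saturatedUnion d 𝔘 𝔙) := by
  rintro S (⟨U, hU, rfl⟩ | ⟨hS, hSfar⟩) T (⟨U', hU', rfl⟩ | ⟨hT, hTfar⟩) hST x hx y hy
  · have hUU' : U ≠ U' := by
      rintro rfl
      exact hST rfl
    obtain ⟨u, hu, hxu⟩ := exists_dist_le_of_mem_saturation hd hR hR𝔙 hx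
    obtain ⟨u', hu', hyu'⟩ := exists_dist_le_of_mem_saturation hd hR hR𝔙 hy
    have huu' := h𝔘 U hU U' hU' hUU' u hu u' hu'
    have := dist_triangle4 u x y u'
    rw [dist_comm u x] at this
    linarith
  · exact le_dist_of_mem_saturation h𝔙 hT (hTfar U hU) hx hy
  · exact dist_comm y x ▸ le_dist_of_mem_saturation h𝔙 hS (hSfar U' hU') hy hx
  · exact h𝔙 S hS T hT hST x hx y hy

theorem sUnion_subset_sUnion_saturatedUnion :
    ⋃₀ 𝔘 ∪ ⋃₀ 𝔙 ⊆ ⋃₀ saturatedUnion d 𝔘 𝔙 := by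
  rintro x (⟨U, hU, hx⟩ | ⟨V, hV, hx⟩)
  · exact ⟨saturation d 𝔙 U, Or.inl (mem_image_of_mem _ hU), Or.inl hx⟩
  · by_cases hnear : ∃ U ∈ 𝔘, NearSets d V U
    · obtain ⟨U, hU, hVU⟩ := hnear
      exact ⟨saturation d 𝔙 U, Or.inl (mem_image_of_mem _ hU), Or.inr ⟨V, ⟨hV, hVU⟩, hx⟩⟩
    · push Not at hnear
      exact ⟨V, Or.inr ⟨hV, hnear⟩, hx⟩

end SaturatedUnion

/-- Finite Union Theorem: if a metric space is the union `A ∪ B` of two subspaces, then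
`asdim (A ∪ B) ≤ max (asdim A) (asdim B)`. -/
theorem asdim_union_le_max (X : Type*) [MetricSpace X] (A B : Set X)
    (hAB : A ∪ B = Set.univ) (m n : ℕ)
    (hA : ASDimLE A m) (hB : ASDimLE B n) :
    ASDimLE X (max m n) := by
  intro d hd
  have hι : Isometry ((↑) : A → X) := isometry_subtype_coe
  have hι' : Isometry ((↑) : B → X) := isometry_subtype_coe
  obtain ⟨𝔙, h𝔙, h𝔙cov⟩ := hB.mono (le_max_right m n) d hd
  obtain ⟨R, hR, hR𝔙⟩ :=
    (unifBounded_iUnion fun i => (h𝔙 i).1.image_isometry hι').exists_nonneg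
  obtain ⟨𝔘, h𝔘, h𝔘cov⟩ := hA.mono (le_max_left m n) (3 * d + 2 * R) (by positivity)
  refine ⟨fun i => saturatedUnion d (image (↑) '' 𝔘 i) (image (↑) '' 𝔙 i),
    fun i => ⟨?_, ?_⟩, fun x => ?_⟩
  · exact ((h𝔘 i).1.image_isometry hι).saturatedUnion hd.le ((h𝔙 i).1.image_isometry hι')
  · exact ((h𝔘 i).2.image_isometry hι).saturatedUnion hd.le hR
      (fun V hV => hR𝔙 V (mem_iUnion_of_mem i hV)) ((h𝔙 i).2.image_isometry hι')
  · obtain ⟨i, hi⟩ : ∃ i, x ∈ ⋃₀ (image (↑) '' 𝔘 i : Set (Set X)) ∪ ⋃₀ (image (↑) '' 𝔙 i) := by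
      rcases hAB.symm ▸ mem_univ x with hxA | hxB
      · obtain ⟨i, hi⟩ := exists_mem_sUnion_image_val h𝔘cov hxA
        exact ⟨i, Or.inl hi⟩
      · obtain ⟨i, hi⟩ := exists_mem_sUnion_image_val h𝔙cov hxB
        exact ⟨i, Or.inr hi⟩
    exact ⟨i, mem_sUnion.1 (sUnion_subset_sUnion_saturatedUnion hi)⟩
end

section
/- Let A = B = C = Z and let the inclusions C → A and C → B both be multiplication by 2. Then asdim(A ∗_C B) = 2; in particular the bound asdim ≤ max{asdim vertex groups} + 1 for amalgamated products is sharp. -/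
/-!
Since both inclusions are multiplication by 2, the group is `⟨a, b | a² = b²⟩`, and it is
isomorphic to `ℤ ⋊ ℤ` via `a ↦ (1, 1)`, `b ↦ (0, 1)`, the generator of the right factor acting
by `n ↦ -n`. In the coordinates `(m, n) ↦ (a b⁻¹)^m b^n` left multiplications are isometries of
`ℤ²` with the sup metric, so every word metric on the group is bi-Lipschitz equivalent to `ℤ²`.

For `ℤ²`, staggered bricks of side `2M`, brick `(j, k)` coloured by `j + 2k mod 3`, give three
families of bounded sets, each `M`-separated, so `asdim ≤ 2`. Conversely, given two families of
`R`-bounded, `2`-separated sets, label each grid point by which coordinate axes its set misses: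
on an `N × N` grid with `N > R` this is a Sperner labelling, so some small triangle carries all
three labels; its three sets are distinct, and two of them lie in the same family while being
at distance `≤ 1`.
-/

open Set Monoid

/-- Asymptotic dimension `≤ n` of a set with a distance function `ρ`. -/
def ASDimLEdist {Z : Type*} (ρ : Z → Z → ℝ) (n : ℕ) : Prop :=
  ∀ d : ℝ, 0 < d → ∃ 𝔘 : Fin (n + 1) → Set (Set Z),
    (∀ i, (∃ R : ℝ, ∀ U ∈ 𝔘 i, ∀ x ∈ U, ∀ y ∈ U, ρ x y ≤ R) ∧
      (∀ U ∈ 𝔘 i, ∀ V ∈ 𝔘 i, U ≠ V → ∀ x ∈ U, ∀ y ∈ V, d ≤ ρ x y)) ∧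
    ∀ z : Z, ∃ i, ∃ U ∈ 𝔘 i, z ∈ U

/-- The word distance on a group associated with a (symmetric) generating set `S`. -/
noncomputable def wordDist {Γ : Type*} [Group Γ] (S : Set Γ) (g h : Γ) : ℕ :=
  sInf {n : ℕ | ∃ l : List Γ, l.length = n ∧ (∀ s ∈ l, s ∈ S) ∧ l.prod = g⁻¹ * h}

/-- The amalgamated free product `A ∗_C B`. -/
def AmalgamatedProduct {A B C : Type*} [Group A] [Group B] [Group C]
    (ja : C →* A) (jb : C →* B) : Type _ :=
  Coprod A B ⧸ Subgroup.normalClosure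
    {x : Coprod A B | ∃ c : C, x = Coprod.inl (ja c) * (Coprod.inr (jb c))⁻¹}

instance {A B C : Type*} [Group A] [Group B] [Group C] (ja : C →* A) (jb : C →* B) :
    Group (AmalgamatedProduct ja jb) := by
  unfold AmalgamatedProduct; infer_instance

/-- The inclusion `ℤ → ℤ` (written multiplicatively) given by multiplication by 2. -/
noncomputable def mulTwo : Multiplicative ℤ →* Multiplicative ℤ :=
  zpowersHom (Multiplicative ℤ) (Multiplicative.ofAdd (2 : ℤ))

namespace ASDimLEdist

variable {Z W : Type*} {ρZ : Z → Z → ℝ} {ρW : W → W → ℝ}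

theorem comap (f : Z → W) {C L : ℝ} (hC : 0 < C) (hL : 0 ≤ L)
    (hle : ∀ x y, ρZ x y ≤ L * ρW (f x) (f y)) (hge : ∀ x y, ρW (f x) (f y) ≤ C * ρZ x y)
    {n : ℕ} (h : ASDimLEdist ρW n) : ASDimLEdist ρZ n := by
  intro d hd
  obtain ⟨𝔘, hfam, hcov⟩ := h (C * d) (by positivity)
  refine ⟨fun i => (f ⁻¹' ·) '' 𝔘 i, fun i => ⟨?_, ?_⟩, ?_⟩
  · obtain ⟨R, hR⟩ := (hfam i).1
    refine ⟨L * R, ?_⟩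
    rintro _ ⟨U, hU, rfl⟩ x hx y hy
    exact (hle x y).trans (mul_le_mul_of_nonneg_left (hR U hU _ hx _ hy) hL)
  · rintro _ ⟨U, hU, rfl⟩ _ ⟨V, hV, rfl⟩ hUV x hx y hy
    have hsep := (hfam i).2 U hU V hV (by rintro rfl; exact hUV rfl) (f x) hx (f y) hy
    exact le_of_mul_le_mul_left (hsep.trans (hge x y)) hC
  · intro z
    obtain ⟨i, U, hU, hz⟩ := hcov (f z)
    exact ⟨i, f ⁻¹' U, ⟨U, hU, rfl⟩, hz⟩

theorem congr (e : Z ≃ W) (hle : ∃ L > 0, ∀ x y, ρZ x y ≤ L * ρW (e x) (e y))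
    (hge : ∃ C > 0, ∀ x y, ρW (e x) (e y) ≤ C * ρZ x y) (n : ℕ) :
    ASDimLEdist ρZ n ↔ ASDimLEdist ρW n := by
  obtain ⟨L, hL, hle⟩ := hle
  obtain ⟨C, hC, hge⟩ := hge
  refine ⟨comap e.symm hL hC.le (fun x y => ?_) (fun x y => ?_), comap e hC hL.le hle hge⟩
  · simpa using hge (e.symm x) (e.symm y)
  · simpa using hle (e.symm x) (e.symm y)

theorem exists_coloring {n : ℕ} (h : ASDimLEdist ρZ n) {d : ℝ} (hd : 0 < d) :
    ∃ (R : ℝ) (c : Z → Fin (n + 1)) (U : Z → Set Z), (∀ z, z ∈ U z) ∧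
      (∀ z, ∀ x ∈ U z, ∀ y ∈ U z, ρZ x y ≤ R) ∧ ∀ x y, c x = c y → U x ≠ U y → d ≤ ρZ x y := by
  obtain ⟨𝔘, hfam, hcov⟩ := h d hd
  choose R hR using fun i => (hfam i).1
  choose c U hU hmem using hcov
  refine ⟨⨆ i, R i, c, U, hmem, fun z x hx y hy => ?_, fun x y hc hne => ?_⟩
  · exact (hR _ _ (hU z) x hx y hy).trans (le_ciSup (Set.finite_range R).bddAbove _)
  · exact (hfam (c x)).2 _ (hU x) _ (hc ▸ hU y) hne x (hmem x) y (hmem y)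

end ASDimLEdist

section WordDist

variable {Γ : Type*} [Group Γ] {S : Set Γ}

theorem wordDist_mul_left (g x y : Γ) : wordDist S (g * x) (g * y) = wordDist S x y := by
  simp [wordDist, mul_assoc]

theorem wordDist_le_length {g h : Γ} {l : List Γ} (hl : ∀ s ∈ l, s ∈ S)
    (hprod : l.prod = g⁻¹ * h) : wordDist S g h ≤ l.length :=
  Nat.sInf_le ⟨l, rfl, hl, hprod⟩

theorem exists_list_length_eq_wordDist (hgen : Subgroup.closure S = ⊤)
    (hsym : ∀ s ∈ S, s⁻¹ ∈ S) (g h : Γ) :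
    ∃ l : List Γ, l.length = wordDist S g h ∧ (∀ s ∈ l, s ∈ S) ∧ l.prod = g⁻¹ * h := by
  have hmem : g⁻¹ * h ∈ Submonoid.closure (S ∪ S⁻¹) := by
    rw [← Subgroup.closure_toSubmonoid, hgen]; trivial
  rw [Set.union_eq_left.mpr fun s hs => by simpa using hsym _ hs] at hmem
  obtain ⟨l, hl, hprod⟩ := Submonoid.exists_list_of_mem_closure hmem
  exact Nat.sInf_mem (s := {n | ∃ l : List Γ, l.length = n ∧ (∀ s ∈ l, s ∈ S) ∧ l.prod = g⁻¹ * h})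
    ⟨_, l, rfl, hl, hprod⟩

variable (hgen : Subgroup.closure S = ⊤) (hsym : ∀ s ∈ S, s⁻¹ ∈ S)
include hgen hsym

theorem wordDist_comm (g h : Γ) : wordDist S g h = wordDist S h g := by
  have key : ∀ g h : Γ, wordDist S g h ≤ wordDist S h g := by
    intro g h
    obtain ⟨l, hlen, hl, hprod⟩ := exists_list_length_eq_wordDist hgen hsym h g
    have hinv : ∀ s ∈ (l.map (·⁻¹)).reverse, s ∈ S := by
      intro s hs
      obtain ⟨t, ht, rfl⟩ := List.mem_map.mp (List.mem_reverse.mp hs)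
      exact hsym t (hl t ht)
    simpa [hlen] using wordDist_le_length hinv
      (by rw [← List.prod_inv_reverse, hprod, mul_inv_rev, inv_inv])
  exact le_antisymm (key g h) (key h g)

theorem wordDist_triangle (g h k : Γ) : wordDist S g k ≤ wordDist S g h + wordDist S h k := by
  obtain ⟨l₁, hlen₁, hl₁, hprod₁⟩ := exists_list_length_eq_wordDist hgen hsym g h
  obtain ⟨l₂, hlen₂, hl₂, hprod₂⟩ := exists_list_length_eq_wordDist hgen hsym h k
  rw [← hlen₁, ← hlen₂, ← List.length_append]
  refine wordDist_le_length (fun s hs => ?_) (by simp [hprod₁, hprod₂, mul_assoc])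
  exact (List.mem_append.mp hs).elim (hl₁ s) (hl₂ s)

theorem wordDist_one_zpow_le (x : Γ) (k : ℤ) :
    wordDist S 1 (x ^ k) ≤ k.natAbs * wordDist S 1 x := by
  have hpow : ∀ n : ℕ, wordDist S 1 (x ^ n) ≤ n * wordDist S 1 x := by
    intro n
    induction n with
    | zero =>
      simpa using wordDist_le_length (S := S) (g := 1) (h := 1) (l := []) (by simp) (by simp)
    | succ n ih =>
      have hadj : wordDist S (x ^ n) (x ^ (n + 1)) = wordDist S 1 x := by
        simpa [pow_succ] using wordDist_mul_left (S := S) (x ^ n) 1 x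
      calc wordDist S 1 (x ^ (n + 1)) ≤ wordDist S 1 (x ^ n) + wordDist S (x ^ n) (x ^ (n + 1)) :=
            wordDist_triangle hgen hsym _ _ _
        _ ≤ (n + 1) * wordDist S 1 x := by rw [hadj]; linarith
  obtain ⟨n, rfl | rfl⟩ := Int.eq_nat_or_neg k
  · simpa using hpow n
  · rw [zpow_neg, zpow_natCast, ← wordDist_mul_left (x ^ n), mul_one, mul_inv_cancel,
      wordDist_comm hgen hsym]
    simpa using hpow n

theorem wordDist_one_zpow_mul_zpow_le (x y : Γ) (p q : ℤ) :
    wordDist S 1 (x ^ p * y ^ q) ≤ p.natAbs * wordDist S 1 x + q.natAbs * wordDist S 1 y :=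
  calc wordDist S 1 (x ^ p * y ^ q) ≤ wordDist S 1 (x ^ p) + wordDist S (x ^ p) (x ^ p * y ^ q) :=
        wordDist_triangle hgen hsym _ _ _
    _ = wordDist S 1 (x ^ p) + wordDist S 1 (y ^ q) := by
        simpa using wordDist_mul_left (S := S) (x ^ p) 1 (y ^ q)
    _ ≤ p.natAbs * wordDist S 1 x + q.natAbs * wordDist S 1 y :=
        add_le_add (wordDist_one_zpow_le hgen hsym x p) (wordDist_one_zpow_le hgen hsym y q)

theorem dist_le_mul_wordDist {X : Type*} [PseudoMetricSpace X] (f : Γ → X)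
    (hf : ∀ g x y, dist (f (g * x)) (f (g * y)) = dist (f x) (f y)) {C : ℝ}
    (hC : ∀ s ∈ S, dist (f 1) (f s) ≤ C) (g h : Γ) :
    dist (f g) (f h) ≤ C * wordDist S g h := by
  have hword : ∀ l : List Γ, (∀ s ∈ l, s ∈ S) → dist (f 1) (f l.prod) ≤ C * l.length := by
    intro l hl
    induction l with
    | nil => simp
    | cons s l ih =>
      have hs := hC s (hl s List.mem_cons_self)
      have hrest := ih fun t ht => hl t (List.mem_cons_of_mem s ht)
      calc dist (f 1) (f (s * l.prod)) ≤ dist (f 1) (f s) + dist (f (s * 1)) (f (s * l.prod)) := by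
            simpa using dist_triangle (f 1) (f s) (f (s * l.prod))
        _ ≤ C * (l.length + 1) := by rw [hf]; linarith
        _ = C * (s :: l).length := by simp
  obtain ⟨l, hlen, hl, hprod⟩ := exists_list_length_eq_wordDist hgen hsym g h
  rw [← hlen, ← hf g⁻¹, inv_mul_cancel, ← hprod]
  exact hword l hl

end WordDist

theorem Int.prod_dist_eq (p q : ℤ × ℤ) :
    dist p q = ((max |p.1 - q.1| |p.2 - q.2| : ℤ) : ℝ) := by
  simp [Prod.dist_eq, Int.dist_eq]

namespace Brick

/-- Brick `(j, k)` of scale `M` is `[M j + 2 M k, M j + 2 M k + 2 M) × [2 M j, 2 M j + 2 M)`: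
rows of height `2 M`, each row shifted by half a brick with respect to the one below. -/
def index (M : ℤ) (p : ℤ × ℤ) : ℤ × ℤ :=
  (p.2 / (2 * M), (p.1 - M * (p.2 / (2 * M))) / (2 * M))

def color (b : ℤ × ℤ) : ZMod 3 := ((b.1 + 2 * b.2 : ℤ) : ZMod 3)

variable {M : ℤ} (hM : 0 < M)
include hM

theorem index_bounds (p : ℤ × ℤ) :
    M * (index M p).1 + 2 * M * (index M p).2 ≤ p.1 ∧
      p.1 < M * (index M p).1 + 2 * M * (index M p).2 + 2 * M ∧
      2 * M * (index M p).1 ≤ p.2 ∧ p.2 < 2 * M * (index M p).1 + 2 * M := by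
  have h2M : 0 < 2 * M := by positivity
  have := Int.ediv_mul_le p.2 h2M.ne'
  have := Int.lt_ediv_add_one_mul_self p.2 h2M
  have := Int.ediv_mul_le (p.1 - M * (p.2 / (2 * M))) h2M.ne'
  have := Int.lt_ediv_add_one_mul_self (p.1 - M * (p.2 / (2 * M))) h2M
  simp only [index]
  refine ⟨?_, ?_, ?_, ?_⟩ <;> linarith

theorem abs_sub_lt_of_index_eq {p q : ℤ × ℤ} (h : index M p = index M q) :
    |p.1 - q.1| < 2 * M ∧ |p.2 - q.2| < 2 * M := by
  have hp := index_bounds hM p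
  have hq := index_bounds hM q
  rw [h] at hp
  exact ⟨abs_sub_lt_iff.mpr ⟨by linarith, by linarith⟩,
    abs_sub_lt_iff.mpr ⟨by linarith, by linarith⟩⟩

theorem index_eq_of_color_eq {p q : ℤ × ℤ} (hcol : color (index M p) = color (index M q))
    (h₁ : |p.1 - q.1| < M) (h₂ : |p.2 - q.2| < M) : index M p = index M q := by
  obtain ⟨hp₁, hp₂, hp₃, hp₄⟩ := index_bounds hM p
  obtain ⟨hq₁, hq₂, hq₃, hq₄⟩ := index_bounds hM q
  rw [abs_sub_lt_iff] at h₁ h₂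
  set j := (index M p).1
  set k := (index M p).2
  set j' := (index M q).1
  set k' := (index M q).2
  have h3 : (3 : ℤ) ∣ (j' + 2 * k') - (j + 2 * k) :=
    (ZMod.intCast_eq_intCast_iff_dvd_sub _ _ 3).mp hcol
  -- rows differ by at most one and horizontal offsets by less than three half-bricks; the only
  -- multiple of 3 left for `j + 2 k` is then `0`
  have hrow₁ : 2 * (j' - j) < 3 := lt_of_mul_lt_mul_left (by linarith) hM.le
  have hrow₂ : -3 < 2 * (j' - j) := lt_of_mul_lt_mul_left (by linarith) hM.le
  have hcol₁ : (j' + 2 * k') - (j + 2 * k) < 3 := lt_of_mul_lt_mul_left (by linarith) hM.le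
  have hcol₂ : -3 < (j' + 2 * k') - (j + 2 * k) := lt_of_mul_lt_mul_left (by linarith) hM.le
  exact Prod.ext (by omega) (by omega)

end Brick

theorem asdimLEdist_int_prod_two : ASDimLEdist (dist : ℤ × ℤ → ℤ × ℤ → ℝ) 2 := by
  intro d hd
  have hM : 0 < ⌈d⌉ := Int.ceil_pos.mpr hd
  -- `ZMod 3` is `Fin 3` by definition, so the colours index the three families directly
  refine ⟨fun i => {U | ∃ b, Brick.color b = i ∧ U = Brick.index ⌈d⌉ ⁻¹' {b}},
    fun i => ⟨⟨2 * ⌈d⌉, ?_⟩, ?_⟩, fun p => ⟨_, _, ⟨_, rfl, rfl⟩, rfl⟩⟩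
  · rintro _ ⟨b, -, rfl⟩ p hp q hq
    obtain ⟨h₁, h₂⟩ := Brick.abs_sub_lt_of_index_eq hM (hp.trans hq.symm)
    rw [Int.prod_dist_eq]
    exact_mod_cast (max_lt h₁ h₂).le
  · rintro _ ⟨b, hb, rfl⟩ _ ⟨b', hb', rfl⟩ hne p hp q hq
    by_contra! hlt
    have hlt' : max |p.1 - q.1| |p.2 - q.2| < ⌈d⌉ := by
      rw [Int.prod_dist_eq] at hlt
      exact_mod_cast hlt.trans_le (Int.le_ceil d)
    have := Brick.index_eq_of_color_eq hM (hp ▸ hq ▸ hb.trans hb'.symm)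
      (lt_of_le_of_lt (le_max_left _ _) hlt') (lt_of_le_of_lt (le_max_right _ _) hlt')
    exact hne (by rw [← Set.mem_singleton_iff.mp hp, ← Set.mem_singleton_iff.mp hq, this])

namespace Sperner

/-- `1` exactly on the edges labelled `{0, 1}`. -/
def edgeParity (a b : Fin 3) : ZMod 2 := if a ≠ b ∧ a ≠ 2 ∧ b ≠ 2 then 1 else 0

theorem edgeParity_triangle : ∀ a b c : Fin 3,
    edgeParity a b + edgeParity b c + edgeParity a c = if [a, b, c].Nodup then 1 else 0 := by
  decide

theorem edgeParity_of_ne_one : ∀ a b : Fin 3, a ≠ 1 → b ≠ 1 → edgeParity a b = 0 := by decide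

theorem edgeParity_of_ne_zero : ∀ a b : Fin 3, a ≠ 0 → b ≠ 0 → edgeParity a b = 0 := by decide

theorem edgeParity_of_ne_two : ∀ a b : Fin 3, a ≠ 2 → b ≠ 2 →
    edgeParity a b = (b.val : ZMod 2) - a.val := by decide

theorem sum_cells_eq_sum_boundary {G : Type*} [AddCommGroup G] (H V : ℕ → ℕ → G) (N : ℕ) :
    ∑ i ∈ Finset.range N, ∑ j ∈ Finset.range N, ((H i (j + 1) - H i j) + (V (i + 1) j - V i j)) =
      ∑ i ∈ Finset.range N, (H i N - H i 0) + ∑ j ∈ Finset.range N, (V N j - V 0 j) := by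
  simp only [Finset.sum_add_distrib, Finset.sum_range_sub]
  rw [Finset.sum_comm, Finset.sum_congr rfl fun j _ => Finset.sum_range_sub (V · j) N]

/-- Sperner's lemma for the `N × N` grid, each square cut along its diagonal into two triangles. -/
theorem exists_rainbow_triangle (N : ℕ) (lab : ℕ → ℕ → Fin 3)
    (hbot : ∀ i ≤ N, lab i 0 ≠ 1) (hleft : ∀ j ≤ N, lab 0 j ≠ 0)
    (htop : ∀ i ≤ N, lab i N ≠ 2) (hright : ∀ j ≤ N, lab N j ≠ 2) :
    ∃ i < N, ∃ j < N, [lab i j, lab (i + 1) j, lab (i + 1) (j + 1)].Nodup ∨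
      [lab i j, lab i (j + 1), lab (i + 1) (j + 1)].Nodup := by
  by_contra! hnone
  set H : ℕ → ℕ → ZMod 2 := fun i j => edgeParity (lab i j) (lab (i + 1) j)
  set V : ℕ → ℕ → ZMod 2 := fun i j => edgeParity (lab i j) (lab i (j + 1))
  -- each cell is the sum of its two triangles, whose common diagonal cancels
  have hcell : ∀ i < N, ∀ j < N, (H i (j + 1) - H i j) + (V (i + 1) j - V i j) = 0 := by
    intro i hi j hj
    have hlow := edgeParity_triangle (lab i j) (lab (i + 1) j) (lab (i + 1) (j + 1))
    have hup := edgeParity_triangle (lab i j) (lab i (j + 1)) (lab (i + 1) (j + 1))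
    rw [if_neg (hnone i hi j hj).1] at hlow
    rw [if_neg (hnone i hi j hj).2] at hup
    have htwo : (2 : ZMod 2) = 0 := rfl
    simp only [H, V, CharTwo.sub_eq_add]
    linear_combination hlow + hup - edgeParity (lab i j) (lab (i + 1) (j + 1)) * htwo
  have hzero := sum_cells_eq_sum_boundary H V N
  rw [Finset.sum_eq_zero fun i hi => Finset.sum_eq_zero fun j hj =>
    hcell i (Finset.mem_range.mp hi) j (Finset.mem_range.mp hj)] at hzero
  have hboundary : ∑ i ∈ Finset.range N, (H i N - H i 0) + ∑ j ∈ Finset.range N, (V N j - V 0 j) =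
      ((lab N N).val - (lab 0 N).val : ZMod 2) + ((lab N N).val - (lab N 0).val) := by
    rw [← Finset.sum_range_sub (fun i => ((lab i N).val : ZMod 2)),
      ← Finset.sum_range_sub (fun j => ((lab N j).val : ZMod 2))]
    congr 1 <;> refine Finset.sum_congr rfl fun i hi => ?_ <;>
      have hi := Finset.mem_range.mp hi
    · simp only [H, edgeParity_of_ne_one _ _ (hbot i (by omega)) (hbot (i + 1) (by omega)),
        edgeParity_of_ne_two _ _ (htop i (by omega)) (htop (i + 1) (by omega)), sub_zero]
    · simp only [V, edgeParity_of_ne_zero _ _ (hleft i (by omega)) (hleft (i + 1) (by omega)),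
        edgeParity_of_ne_two _ _ (hright i (by omega)) (hright (i + 1) (by omega)), sub_zero]
  have hcorner₁ : lab 0 N = 1 := by
    have := hleft N le_rfl; have := htop 0 (Nat.zero_le N); omega
  have hcorner₂ : lab N 0 = 0 := by
    have := hbot N le_rfl; have := hright 0 (Nat.zero_le N); omega
  rw [hboundary, hcorner₁, hcorner₂] at hzero
  revert hzero
  generalize ((lab N N).val : ZMod 2) = x
  revert x
  decide

end Sperner

open Classical in
noncomputable def axisLabel (U : Set (ℤ × ℤ)) : Fin 3 :=
  if ∀ q ∈ U, q.1 ≠ 0 then 0 else if ∀ q ∈ U, q.2 ≠ 0 then 1 else 2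

theorem axisLabel_ne_zero {U : Set (ℤ × ℤ)} {q : ℤ × ℤ} (hq : q ∈ U) (h : q.1 = 0) :
    axisLabel U ≠ 0 := by
  unfold axisLabel
  split_ifs with h₁ h₂ <;> first | exact absurd h (h₁ q hq) | decide

theorem axisLabel_ne_one {U : Set (ℤ × ℤ)} {q : ℤ × ℤ} (hq : q ∈ U) (h : q.2 = 0) :
    axisLabel U ≠ 1 := by
  unfold axisLabel
  split_ifs with h₁ h₂ <;> first | exact absurd h (h₂ q hq) | decide

theorem exists_mem_of_axisLabel_eq_two {U : Set (ℤ × ℤ)} (h : axisLabel U = 2) :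
    (∃ q ∈ U, q.1 = 0) ∧ ∃ q ∈ U, q.2 = 0 := by
  unfold axisLabel at h
  split_ifs at h with h₁ h₂ <;> first | exact absurd h (by decide) | skip
  push Not at h₁ h₂
  exact ⟨h₁, h₂⟩

theorem not_asdimLEdist_int_prod_one : ¬ ASDimLEdist (dist : ℤ × ℤ → ℤ × ℤ → ℝ) 1 := by
  intro h
  obtain ⟨R, c, U, hmem, hdiam, hsep⟩ := h.exists_coloring two_pos
  obtain ⟨N, hN⟩ := exists_nat_gt R
  have hfar : ∀ p : ℤ × ℤ, (p.1 = N ∨ p.2 = N) → axisLabel (U p) ≠ 2 := by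
    intro p hp hlab
    obtain ⟨⟨q₁, hq₁, h₁⟩, ⟨q₂, hq₂, h₂⟩⟩ := exists_mem_of_axisLabel_eq_two hlab
    have hR₁ := hdiam p p (hmem p) q₁ hq₁
    have hR₂ := hdiam p p (hmem p) q₂ hq₂
    rw [Int.prod_dist_eq] at hR₁ hR₂
    have : (N : ℝ) ≤ R := by
      rcases hp with hp | hp
      · exact le_trans (by exact_mod_cast (by simp [hp, h₁] : (N : ℤ) ≤ _)) hR₁
      · exact le_trans (by exact_mod_cast (by simp [hp, h₂] : (N : ℤ) ≤ _)) hR₂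
    linarith
  have hrainbow : ∀ u v w : ℤ × ℤ, dist u v ≤ 1 → dist v w ≤ 1 → dist u w ≤ 1 →
      ¬ [axisLabel (U u), axisLabel (U v), axisLabel (U w)].Nodup := by
    intro u v w huv hvw huw hnodup
    simp only [List.nodup_cons, List.mem_cons, List.not_mem_nil, or_false, not_or] at hnodup
    have hsep' : ∀ x y, dist x y ≤ 1 → axisLabel (U x) ≠ axisLabel (U y) → c x ≠ c y :=
      fun x y hxy hne hc => by
        linarith [hsep x y hc fun hU => hne (congrArg axisLabel hU)]
    have hpigeon : ∀ a b c : Fin 2, a = b ∨ b = c ∨ a = c := by decide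
    rcases hpigeon (c u) (c v) (c w) with h | h | h
    · exact hsep' u v huv hnodup.1.1 h
    · exact hsep' v w hvw hnodup.2.1 h
    · exact hsep' u w huw hnodup.1.2 h
  have hadj : ∀ a b : ℕ, ∀ a' b' : ℕ, a ≤ a' → a' ≤ a + 1 → b ≤ b' → b' ≤ b + 1 →
      dist ((a : ℤ), (b : ℤ)) ((a' : ℤ), (b' : ℤ)) ≤ 1 := by
    intro a b a' b' h₁ h₂ h₃ h₄
    rw [Int.prod_dist_eq]
    exact_mod_cast max_le (abs_sub_le_iff.mpr ⟨by omega, by omega⟩)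
      (abs_sub_le_iff.mpr ⟨by omega, by omega⟩)
  obtain ⟨i, -, j, -, h | h⟩ := Sperner.exists_rainbow_triangle N (fun i j => axisLabel (U (i, j)))
    (fun i _ => axisLabel_ne_one (hmem _) rfl) (fun j _ => axisLabel_ne_zero (hmem _) rfl)
    (fun i _ => hfar _ (Or.inr rfl)) (fun j _ => hfar _ (Or.inl rfl))
  · refine hrainbow _ _ _ (hadj _ _ _ _ ?_ ?_ ?_ ?_) (hadj _ _ _ _ ?_ ?_ ?_ ?_)
      (hadj _ _ _ _ ?_ ?_ ?_ ?_) h <;> omega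
  · refine hrainbow _ _ _ (hadj _ _ _ _ ?_ ?_ ?_ ?_) (hadj _ _ _ _ ?_ ?_ ?_ ?_)
      (hadj _ _ _ _ ?_ ?_ ?_ ?_) h <;> omega

namespace AmalgamatedProduct

variable {A B C H : Type*} [Group A] [Group B] [Group C] [Group H] {ja : C →* A} {jb : C →* B}

def mk : Coprod A B →* AmalgamatedProduct ja jb := QuotientGroup.mk' _

def inl : A →* AmalgamatedProduct ja jb := mk.comp Coprod.inl

def inr : B →* AmalgamatedProduct ja jb := mk.comp Coprod.inr

theorem inl_apply_eq_inr_apply (c : C) :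
    (inl (ja c) : AmalgamatedProduct ja jb) = inr (jb c) := by
  have : (mk (Coprod.inl (ja c) * (Coprod.inr (jb c))⁻¹) : AmalgamatedProduct ja jb) = 1 :=
    (QuotientGroup.eq_one_iff _).mpr (Subgroup.subset_normalClosure ⟨c, rfl⟩)
  rwa [map_mul, map_inv, mul_inv_eq_one] at this

def lift (f : A →* H) (g : B →* H) (h : ∀ c, f (ja c) = g (jb c)) :
    AmalgamatedProduct ja jb →* H :=
  QuotientGroup.lift _ (Coprod.lift f g) <| Subgroup.normalClosure_le_normal <| by
    rintro _ ⟨c, rfl⟩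
    simp [h]

@[simp]
theorem lift_inl (f : A →* H) (g : B →* H) (h : ∀ c, f (ja c) = g (jb c)) (a : A) :
    lift f g h (inl a) = f a :=
  Coprod.lift_apply_inl f g a

@[simp]
theorem lift_inr (f : A →* H) (g : B →* H) (h : ∀ c, f (ja c) = g (jb c)) (b : B) :
    lift f g h (inr b) = g b :=
  Coprod.lift_apply_inr f g b

theorem hom_ext {f g : AmalgamatedProduct ja jb →* H} (hl : f.comp inl = g.comp inl)
    (hr : f.comp inr = g.comp inr) : f = g :=
  QuotientGroup.monoidHom_ext _ (Coprod.hom_ext hl hr)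

end AmalgamatedProduct

namespace KleinBottle

open Multiplicative

def signAction : Multiplicative ℤ →* MulAut (Multiplicative ℤ) :=
  zpowersHom _ (MulEquiv.inv _)

theorem signAction_eq_one_or_inv (r : Multiplicative ℤ) :
    signAction r = 1 ∨ signAction r = MulEquiv.inv _ := by
  have hsq : MulEquiv.inv (Multiplicative ℤ) ^ 2 = 1 := by
    ext z; simp [pow_two]
  obtain ⟨m, hm | hm⟩ := Int.even_or_odd' (toAdd r) <;> simp only [signAction, zpowersHom_apply, hm]
  · left; rw [zpow_mul, zpow_ofNat, hsq, one_zpow]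
  · right; rw [zpow_add_one, zpow_mul, zpow_ofNat, hsq, one_zpow, one_mul]

abbrev IntSemidirect : Type := Multiplicative ℤ ⋊[signAction] Multiplicative ℤ

noncomputable def a : AmalgamatedProduct mulTwo mulTwo := AmalgamatedProduct.inl (ofAdd 1)

noncomputable def b : AmalgamatedProduct mulTwo mulTwo := AmalgamatedProduct.inr (ofAdd 1)

theorem mulTwo_apply (z : Multiplicative ℤ) : mulTwo z = z ^ 2 := by
  apply toAdd.injective
  simp only [mulTwo, zpowersHom_apply, toAdd_zpow, toAdd_pow, toAdd_ofAdd, smul_eq_mul,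
    nsmul_eq_mul]
  push_cast
  ring

theorem a_sq_eq_b_sq : a ^ 2 = b ^ 2 := by
  simpa [a, b, mulTwo_apply] using
    (AmalgamatedProduct.inl_apply_eq_inr_apply (ja := mulTwo) (jb := mulTwo) (ofAdd 1))

theorem b_mul_ab_mul_b_inv : b * (a * b⁻¹) * b⁻¹ = (a * b⁻¹)⁻¹ := by
  have h := a_sq_eq_b_sq
  rw [pow_two, pow_two] at h
  calc b * (a * b⁻¹) * b⁻¹ = b * a⁻¹ * (a * a) * b⁻¹ * b⁻¹ := by group
    _ = (a * b⁻¹)⁻¹ := by rw [h]; group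

theorem ab_zpow_signAction_eq_conj (k : ℤ) (z : Multiplicative ℤ) :
    (a * b⁻¹) ^ toAdd (signAction (ofAdd k) z) = b ^ k * (a * b⁻¹) ^ toAdd z * (b ^ k)⁻¹ := by
  have hinv : ∀ n : ℤ, ((a * b⁻¹) ^ n)⁻¹ = b * (a * b⁻¹) ^ n * b⁻¹ := fun n => by
    rw [← conj_zpow, b_mul_ab_mul_b_inv, inv_zpow]
  have hinv' : ∀ n : ℤ, ((a * b⁻¹) ^ n)⁻¹ = b⁻¹ * (a * b⁻¹) ^ n * b := fun n => by
    have := congrArg (b⁻¹ * ·⁻¹ * b) (hinv n)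
    simp only [inv_inv, mul_inv_rev] at this
    rw [this]; group
  induction k using Int.induction_on generalizing z with
  | zero => simp [signAction]
  | succ k ih =>
    have : signAction (ofAdd ((k : ℤ) + 1)) z = signAction (ofAdd (k : ℤ)) z⁻¹ := by
      simp [signAction, zpowersHom_apply, zpow_add_one]
    rw [this, ih, toAdd_inv, zpow_neg (a * b⁻¹), hinv]
    group
  | pred k ih =>
    have : signAction (ofAdd (-(k : ℤ) - 1)) z = signAction (ofAdd (-(k : ℤ))) z⁻¹ := by
      simp [signAction, zpowersHom_apply, zpow_sub_one]
    rw [this, ih, toAdd_inv, zpow_neg (a * b⁻¹), hinv']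
    group

def u : IntSemidirect := SemidirectProduct.inl (ofAdd 1)

def v : IntSemidirect := SemidirectProduct.inr (ofAdd 1)

theorem v_mul_u_mul_v_inv : v * u * v⁻¹ = u⁻¹ := by
  rw [u, v, ← map_inv, ← SemidirectProduct.inl_aut, ← map_inv]
  rfl

theorem u_mul_v_sq : (u * v) ^ 2 = v ^ 2 :=
  calc (u * v) ^ 2 = u * (v * u * v⁻¹) * v ^ 2 := by rw [pow_two, pow_two]; group
    _ = v ^ 2 := by rw [v_mul_u_mul_v_inv]; group

noncomputable def toIntSemidirect : AmalgamatedProduct mulTwo mulTwo →* IntSemidirect :=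
  AmalgamatedProduct.lift (zpowersHom _ (u * v)) (zpowersHom _ v) fun c => by
    simp only [zpowersHom_apply, mulTwo_apply, toAdd_pow, nsmul_eq_mul, zpow_mul]
    exact_mod_cast congrArg (· ^ toAdd c) u_mul_v_sq

noncomputable def ofIntSemidirect : IntSemidirect →* AmalgamatedProduct mulTwo mulTwo :=
  SemidirectProduct.lift (zpowersHom _ (a * b⁻¹)) (zpowersHom _ b) fun k => by
    ext
    simp only [MonoidHom.comp_apply, MulEquiv.coe_toMonoidHom, zpowersHom_apply, MulAut.conj_apply]
    simpa using ab_zpow_signAction_eq_conj (toAdd k) (ofAdd 1)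

noncomputable def equivIntSemidirect : AmalgamatedProduct mulTwo mulTwo ≃* IntSemidirect :=
  toIntSemidirect.toMulEquiv ofIntSemidirect
    (AmalgamatedProduct.hom_ext
      (MonoidHom.ext_mint (by simp [toIntSemidirect, ofIntSemidirect, u, v, a]))
      (MonoidHom.ext_mint (by simp [toIntSemidirect, ofIntSemidirect, v, b])))
    (SemidirectProduct.hom_ext
      (MonoidHom.ext_mint (by simp [toIntSemidirect, ofIntSemidirect, u, v, a, b]))
      (MonoidHom.ext_mint (by simp [toIntSemidirect, ofIntSemidirect, v, b])))

noncomputable def coords : AmalgamatedProduct mulTwo mulTwo ≃ ℤ × ℤ where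
  toFun g := (toAdd (equivIntSemidirect g).left, toAdd (equivIntSemidirect g).right)
  invFun p := equivIntSemidirect.symm ⟨ofAdd p.1, ofAdd p.2⟩
  left_inv g := by simp
  right_inv p := by simp

theorem coords_symm_apply (p : ℤ × ℤ) : coords.symm p = (a * b⁻¹) ^ p.1 * b ^ p.2 := by
  simp [coords, SemidirectProduct.mk_eq_inl_mul_inr, equivIntSemidirect, ofIntSemidirect]

theorem coords_one : coords 1 = 0 := by
  simp [coords]

theorem exists_coords_mul (g : AmalgamatedProduct mulTwo mulTwo) : ∃ ε : ℤ, |ε| = 1 ∧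
    ∀ x, coords (g * x) = ((coords g).1 + ε * (coords x).1, (coords g).2 + (coords x).2) := by
  rcases signAction_eq_one_or_inv (equivIntSemidirect g).right with h | h
  · exact ⟨1, abs_one, fun x => by simp [coords, SemidirectProduct.mul_left, h]⟩
  · exact ⟨-1, by simp, fun x => by simp [coords, SemidirectProduct.mul_left, h]⟩

theorem dist_coords_mul_left (g x y : AmalgamatedProduct mulTwo mulTwo) :
    dist (coords (g * x)) (coords (g * y)) = dist (coords x) (coords y) := by
  obtain ⟨ε, hε, h⟩ := exists_coords_mul g
  simp only [Int.prod_dist_eq, h, add_sub_add_left_eq_sub, ← mul_sub, abs_mul, hε, one_mul]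

section WordMetric

variable (S : Finset (AmalgamatedProduct mulTwo mulTwo))
  (hgen : Subgroup.closure (S : Set (AmalgamatedProduct mulTwo mulTwo)) = ⊤)
  (hsym : ∀ s ∈ S, s⁻¹ ∈ S)
include hgen hsym

theorem exists_wordDist_le_mul_dist_coords : ∃ L > 0, ∀ g h,
    (wordDist (S : Set _) g h : ℝ) ≤ L * dist (coords g) (coords h) := by
  set wa := wordDist (S : Set (AmalgamatedProduct mulTwo mulTwo)) 1 (a * b⁻¹)
  set wb := wordDist (S : Set (AmalgamatedProduct mulTwo mulTwo)) 1 b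
  refine ⟨wa + wb + 1, by positivity, fun g h => ?_⟩
  set p := coords (g⁻¹ * h)
  have hword : wordDist (S : Set _) g h ≤ p.1.natAbs * wa + p.2.natAbs * wb := by
    rw [← wordDist_mul_left g⁻¹, inv_mul_cancel, ← coords.symm_apply_apply (g⁻¹ * h),
      coords_symm_apply]
    exact wordDist_one_zpow_mul_zpow_le hgen hsym _ _ _ _
  have hdist : dist (coords g) (coords h) = max |(p.1 : ℝ)| |(p.2 : ℝ)| := by
    rw [← dist_coords_mul_left g⁻¹, inv_mul_cancel, coords_one, Int.prod_dist_eq]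
    simp [p]
  rw [hdist]
  calc (wordDist (S : Set _) g h : ℝ) ≤ |(p.1 : ℝ)| * wa + |(p.2 : ℝ)| * wb := by
        simpa [Nat.cast_natAbs] using (Nat.cast_le (α := ℝ)).mpr hword
    _ ≤ max |(p.1 : ℝ)| |(p.2 : ℝ)| * wa + max |(p.1 : ℝ)| |(p.2 : ℝ)| * wb := by
        gcongr
        exacts [le_max_left _ _, le_max_right _ _]
    _ ≤ (wa + wb + 1) * max |(p.1 : ℝ)| |(p.2 : ℝ)| := by
        nlinarith [(abs_nonneg (p.1 : ℝ)).trans (le_max_left _ |(p.2 : ℝ)|)]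

theorem exists_dist_coords_le_mul_wordDist : ∃ C > 0, ∀ g h,
    dist (coords g) (coords h) ≤ C * wordDist (S : Set _) g h := by
  set C := ∑ s ∈ S, dist (coords 1) (coords s)
  refine ⟨C + 1, by positivity, fun g h => ?_⟩
  have hC : ∀ s ∈ (S : Set (AmalgamatedProduct mulTwo mulTwo)), dist (coords 1) (coords s) ≤ C :=
    fun s hs => Finset.single_le_sum (fun t _ => dist_nonneg) hs
  calc dist (coords g) (coords h) ≤ C * wordDist (S : Set _) g h :=
        dist_le_mul_wordDist hgen hsym coords dist_coords_mul_left hC g h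
    _ ≤ (C + 1) * wordDist (S : Set _) g h := by gcongr; linarith

end WordMetric

end KleinBottle

/-- Let `A = B = C = ℤ` and let both inclusions `C → A` and `C → B` be multiplication
by 2. Then `asdim (A ∗_C B) = 2` (for any word metric): `asdim ≤ 2` but not `≤ 1`.
In particular the bound `asdim ≤ max {asdim of the vertex groups} + 1` for amalgamated
products is sharp. -/
theorem asdim_klein_bottle_group_eq_two :
    ∀ S : Finset (AmalgamatedProduct mulTwo mulTwo),
      Subgroup.closure (S : Set (AmalgamatedProduct mulTwo mulTwo)) = ⊤ →
      (∀ s ∈ S, s⁻¹ ∈ S) →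
      ASDimLEdist
        (fun a b : AmalgamatedProduct mulTwo mulTwo =>
          (wordDist (S : Set (AmalgamatedProduct mulTwo mulTwo)) a b : ℝ)) 2 ∧
      ¬ ASDimLEdist
        (fun a b : AmalgamatedProduct mulTwo mulTwo =>
          (wordDist (S : Set (AmalgamatedProduct mulTwo mulTwo)) a b : ℝ)) 1 := by
  intro S hgen hsym
  have hcongr := ASDimLEdist.congr KleinBottle.coords
    (KleinBottle.exists_wordDist_le_mul_dist_coords S hgen hsym)
    (KleinBottle.exists_dist_coords_le_mul_wordDist S hgen hsym)
  exact ⟨(hcongr 2).mpr asdimLEdist_int_prod_two,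
    fun h => not_asdimLEdist_int_prod_one ((hcongr 1).mp h)⟩
end
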